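/- Fix c ∈ [0,1] with k(c) > 0. The function u(·; c) is continuously differentiable on all of ℝ (value matching and smooth fit hold at β*(c): u(β*(c); c) = 0 and u′(β*(c); c) = 0), is convex on ℝ, and is nonnegative on ℝ. -/

import Mathlib

/-!
The kernel `t ^ (λ/θ - 1) * exp (-t²/2 - a t (x - μ))` is positive and convex in `x`, and is
dominated locally uniformly in `x` by a Gamma integrand, so `φ` is positive, convex and `C¹`.
Since `G` is affine, increasing and vanishes at `x₀`, the condition `β < x₀` makes `G(β) < 0`,
so `v := G - (G(β)/φ(β)) φ` is convex. By construction `v(β) = 0`, and `H(β) = 0` says exactly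
`v'(β) = 0`. A convex function with a critical point at `β` is minimal there and nondecreasing
on `[β, ∞)`, so `u = v ∘ max(·, β)` is convex, nonnegative and `C¹`.
-/

open MeasureTheory Real Set Filter

/-- The (positive multiple of the) strictly decreasing fundamental solution `φ_λ` of the
Ornstein–Uhlenbeck equation `(1/2)σ² f'' + θ(μ - x) f' = λ f`, written as the integral
`φ(x) = ∫₀^∞ t^(λ/θ - 1) exp(-t²/2 - a t (x - μ)) dt` with `a = √(2θ)/σ`. -/
noncomputable def OUphi (lam th mu sig : ℝ) (x : ℝ) : ℝ :=
  ∫ t in Set.Ioi (0:ℝ),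
    t ^ (lam / th - 1) * Real.exp (-t ^ 2 / 2 - Real.sqrt (2 * th) / sig * t * (x - mu))

/-- `k(c) = λ + θ + λ Φ'(c)`. -/
noncomputable def kfun (lam th : ℝ) (Phi : ℝ → ℝ) (c : ℝ) : ℝ :=
  lam + th + lam * deriv Phi c

/-- `G(x; c) = μ(k(c) - θ)/λ + k(c)(x - μ)/(λ + θ)`. -/
noncomputable def Gfun (lam th mu : ℝ) (Phi : ℝ → ℝ) (x c : ℝ) : ℝ :=
  mu * (kfun lam th Phi c - th) / lam + kfun lam th Phi c * (x - mu) / (lam + th)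

/-- `x₀(c) = -θμΦ'(c)/k(c)`. -/
noncomputable def x0fun (lam th mu : ℝ) (Phi : ℝ → ℝ) (c : ℝ) : ℝ :=
  -(th * mu * deriv Phi c) / kfun lam th Phi c

/-- The smooth-fit function `H(x;c) = (k(c)/(λ+θ)) φ(x) - G(x;c) φ'(x)`. -/
noncomputable def Hfun (lam th mu sig : ℝ) (Phi : ℝ → ℝ) (x c : ℝ) : ℝ :=
  kfun lam th Phi c / (lam + th) * OUphi lam th mu sig x
    - Gfun lam th mu Phi x c * deriv (OUphi lam th mu sig) x

/-- The candidate value function of the optimal stopping problem: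
`u(x;c) = G(x;c) - (G(β;c)/φ(β)) φ(x)` for `x > β` and `u(x;c) = 0` for `x ≤ β`. -/
noncomputable def ufun (lam th mu sig : ℝ) (Phi : ℝ → ℝ) (b : ℝ) (x c : ℝ) : ℝ :=
  if b < x then
    Gfun lam th mu Phi x c
      - Gfun lam th mu Phi b c / OUphi lam th mu sig b * OUphi lam th mu sig x
  else 0

theorem integrableOn_rpow_mul_exp_neg {q : ℝ} (hq : -1 < q) :
    IntegrableOn (fun t : ℝ => t ^ q * exp (-t)) (Ioi 0) := by
  simpa [mul_comm] using GammaIntegral_convergent (show 0 < q + 1 by linarith)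

theorem convexOn_exp_mul_add (c d : ℝ) : ConvexOn ℝ univ (fun x => exp (c * x + d)) := by
  refine ⟨convex_univ, fun x _ y _ s w hs hw hsw => ?_⟩
  have h := convexOn_exp.2 (mem_univ (c * x + d)) (mem_univ (c * y + d)) hs hw hsw
  simp only [smul_eq_mul] at h ⊢
  convert h using 2
  linear_combination (-d) * hsw

theorem convexOn_integral_of_ae_convexOn {E α : Type*} [AddCommGroup E] [Module ℝ E]
    [MeasurableSpace α] {μ : Measure α} {s : Set E} {F : E → α → ℝ}
    (hs : Convex ℝ s) (hint : ∀ x ∈ s, Integrable (F x) μ)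
    (hconv : ∀ᵐ t ∂μ, ConvexOn ℝ s (F · t)) :
    ConvexOn ℝ s (fun x => ∫ t, F x t ∂μ) := by
  refine ⟨hs, fun x hx y hy a b ha hb hab => ?_⟩
  have hx' : Integrable (fun t => a • F x t) μ := (hint x hx).smul a
  have hy' : Integrable (fun t => b • F y t) μ := (hint y hy).smul b
  calc ∫ t, F (a • x + b • y) t ∂μ ≤ ∫ t, (a • F x t + b • F y t) ∂μ :=
        integral_mono_ae (hint _ (hs hx hy ha hb hab)) (hx'.add hy')
          (hconv.mono fun t ht => ht.2 hx hy ha hb hab)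
    _ = a • ∫ t, F x t ∂μ + b • ∫ t, F y t ∂μ := by
        rw [integral_add hx' hy', integral_smul, integral_smul]

section OUKernel

variable (p a m : ℝ)

noncomputable def ouKernel (x t : ℝ) : ℝ := t ^ p * exp (-t ^ 2 / 2 - a * t * (x - m))

variable {p a m}

theorem ouKernel_pos (x : ℝ) {t : ℝ} (ht : 0 < t) : 0 < ouKernel p a m x t :=
  mul_pos (rpow_pos_of_pos ht p) (exp_pos _)

theorem continuousOn_ouKernel (x : ℝ) : ContinuousOn (ouKernel p a m x) (Ioi 0) :=
  (continuousOn_id.rpow_const fun t ht => Or.inl (ne_of_gt ht)).mul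
    (by fun_prop : Continuous fun t => exp (-t ^ 2 / 2 - a * t * (x - m))).continuousOn

theorem mul_ouKernel (x : ℝ) {t : ℝ} (ht : 0 < t) :
    t * ouKernel p a m x t = ouKernel (p + 1) a m x t := by
  simp only [ouKernel, rpow_add_one ht.ne']
  ring

/-- Completing the square `-t²/2 + R t ≤ (1 + R)²/2 - t` reduces the kernel to a Gamma integrand. -/
theorem ouKernel_le {x t R : ℝ} (ht : 0 < t) (hR : |a * (x - m)| ≤ R) :
    ouKernel p a m x t ≤ exp ((1 + R) ^ 2 / 2) * (t ^ p * exp (-t)) := by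
  have hlin : -(a * t * (x - m)) ≤ R * t := by
    nlinarith [neg_le_abs (a * (x - m))]
  have hexp : -t ^ 2 / 2 - a * t * (x - m) ≤ (1 + R) ^ 2 / 2 + -t := by
    nlinarith [sq_nonneg (t - (1 + R))]
  calc ouKernel p a m x t ≤ t ^ p * exp ((1 + R) ^ 2 / 2 + -t) :=
        mul_le_mul_of_nonneg_left (exp_le_exp.2 hexp) (rpow_nonneg ht.le p)
    _ = exp ((1 + R) ^ 2 / 2) * (t ^ p * exp (-t)) := by
        rw [exp_add]
        ring

theorem integrableOn_ouKernel (hp : -1 < p) (x : ℝ) : IntegrableOn (ouKernel p a m x) (Ioi 0) := by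
  refine Integrable.mono' ((integrableOn_rpow_mul_exp_neg hp).const_mul
    (exp ((1 + |a * (x - m)|) ^ 2 / 2)))
    ((continuousOn_ouKernel x).aestronglyMeasurable measurableSet_Ioi) ?_
  filter_upwards [ae_restrict_mem measurableSet_Ioi] with t ht
  rw [norm_of_nonneg (ouKernel_pos x ht).le]
  exact ouKernel_le ht le_rfl

theorem integral_ouKernel_pos (hp : -1 < p) (x : ℝ) : 0 < ∫ t in Ioi 0, ouKernel p a m x t := by
  rw [setIntegral_pos_iff_support_of_nonneg_ae
    (ae_restrict_of_forall_mem measurableSet_Ioi fun t ht => (ouKernel_pos x ht).le)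
    (integrableOn_ouKernel hp x)]
  have hsupp : Ioi (0 : ℝ) ⊆ Function.support (ouKernel p a m x) ∩ Ioi 0 :=
    fun t ht => ⟨(ouKernel_pos x ht).ne', ht⟩
  exact (by simp : (0 : ENNReal) < volume (Ioi (0 : ℝ))).trans_le (measure_mono hsupp)

theorem hasDerivAt_ouKernel (x t : ℝ) :
    HasDerivAt (fun y => ouKernel p a m y t) (-(a * t) * ouKernel p a m x t) x := by
  have hexp : HasDerivAt (fun y => -t ^ 2 / 2 - a * t * (y - m)) (-(a * t)) x := by
    simpa using ((hasDerivAt_id x).sub_const m).const_mul (a * t) |>.const_sub (-t ^ 2 / 2)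
  refine (hexp.exp.const_mul (t ^ p)).congr_deriv ?_
  unfold ouKernel
  ring

theorem norm_deriv_ouKernel_le {x₀ x t : ℝ} (ht : 0 < t) (hx : x ∈ Metric.ball x₀ 1) :
    ‖-(a * t) * ouKernel p a m x t‖ ≤
      |a| * exp ((1 + |a| * (|x₀ - m| + 1)) ^ 2 / 2) * (t ^ (p + 1) * exp (-t)) := by
  have hR : |a * (x - m)| ≤ |a| * (|x₀ - m| + 1) := by
    rw [abs_mul]
    gcongr
    calc |x - m| ≤ |x - x₀| + |x₀ - m| := abs_sub_le x x₀ m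
      _ ≤ |x₀ - m| + 1 := by rw [← Real.dist_eq]; linarith [Metric.mem_ball.1 hx]
  calc ‖-(a * t) * ouKernel p a m x t‖ = |a| * ouKernel (p + 1) a m x t := by
        rw [← mul_ouKernel x ht, norm_mul, norm_neg, norm_mul, norm_of_nonneg ht.le,
          norm_of_nonneg (ouKernel_pos x ht).le, Real.norm_eq_abs]
        ring
    _ ≤ _ := by
        rw [mul_assoc]
        exact mul_le_mul_of_nonneg_left (ouKernel_le ht hR) (abs_nonneg a)

theorem aestronglyMeasurable_deriv_ouKernel (x : ℝ) :
    AEStronglyMeasurable (fun t => -(a * t) * ouKernel p a m x t) (volume.restrict (Ioi 0)) :=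
  ((continuous_const.mul continuous_id).neg.continuousOn.mul (continuousOn_ouKernel x)
    ).aestronglyMeasurable measurableSet_Ioi

theorem hasDerivAt_integral_ouKernel (hp : -1 < p) (x₀ : ℝ) :
    HasDerivAt (fun x => ∫ t in Ioi 0, ouKernel p a m x t)
      (∫ t in Ioi 0, -(a * t) * ouKernel p a m x₀ t) x₀ :=
  (hasDerivAt_integral_of_dominated_loc_of_deriv_le (F := fun x t => ouKernel p a m x t)
    (F' := fun x t => -(a * t) * ouKernel p a m x t)
    (bound := fun t => |a| * exp ((1 + |a| * (|x₀ - m| + 1)) ^ 2 / 2) * (t ^ (p + 1) * exp (-t)))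
    (Metric.ball_mem_nhds x₀ one_pos)
    (Eventually.of_forall fun x =>
      (continuousOn_ouKernel x).aestronglyMeasurable measurableSet_Ioi)
    (integrableOn_ouKernel hp x₀) (aestronglyMeasurable_deriv_ouKernel x₀)
    (ae_restrict_of_forall_mem measurableSet_Ioi fun t ht x hx => norm_deriv_ouKernel_le ht hx)
    ((integrableOn_rpow_mul_exp_neg (by linarith)).const_mul _)
    (ae_of_all _ fun t x _ => hasDerivAt_ouKernel x t)).2

theorem continuous_integral_deriv_ouKernel (hp : -1 < p) :
    Continuous fun x => ∫ t in Ioi 0, -(a * t) * ouKernel p a m x t := by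
  refine continuous_iff_continuousAt.2 fun x₀ => continuousAt_of_dominated
    (bound := fun t => |a| * exp ((1 + |a| * (|x₀ - m| + 1)) ^ 2 / 2) * (t ^ (p + 1) * exp (-t)))
    (Eventually.of_forall aestronglyMeasurable_deriv_ouKernel)
    ?_ ((integrableOn_rpow_mul_exp_neg (q := p + 1) (by linarith)).const_mul _)
    (ae_of_all _ fun t => ((hasDerivAt_ouKernel x₀ t).continuousAt.const_mul (-(a * t))))
  filter_upwards [Metric.ball_mem_nhds x₀ one_pos] with x hx
  exact ae_restrict_of_forall_mem measurableSet_Ioi fun t ht => norm_deriv_ouKernel_le ht hx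

theorem convexOn_ouKernel {t : ℝ} (ht : 0 ≤ t) : ConvexOn ℝ univ (fun x => ouKernel p a m x t) := by
  have heq : (fun x => ouKernel p a m x t) =
      fun x => t ^ p • exp (-(a * t) * x + (-t ^ 2 / 2 + a * t * m)) := by
    ext x
    simp only [ouKernel, smul_eq_mul]
    ring_nf
  rw [heq]
  exact (convexOn_exp_mul_add _ _).smul (rpow_nonneg ht p)

theorem convexOn_integral_ouKernel (hp : -1 < p) :
    ConvexOn ℝ univ fun x => ∫ t in Ioi 0, ouKernel p a m x t :=
  convexOn_integral_of_ae_convexOn convex_univ (fun x _ => integrableOn_ouKernel hp x)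
    (ae_restrict_of_forall_mem measurableSet_Ioi fun _ ht => convexOn_ouKernel (le_of_lt ht))

end OUKernel

section FreeBoundary

variable {v v' : ℝ → ℝ} {b : ℝ}

theorem ConvexOn.isMinOn_of_hasDerivAt_eq_zero (hv : ConvexOn ℝ univ v) (h : HasDerivAt v 0 b) :
    IsMinOn v univ b :=
  hv.isMinOn_of_rightDeriv_eq_zero (by simp)
    (h.hasDerivWithinAt.derivWithin (uniqueDiffWithinAt_Ioi b))

theorem ConvexOn.monotoneOn_Ici_of_isMinOn (hv : ConvexOn ℝ univ v) (hmin : IsMinOn v univ b) :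
    MonotoneOn v (Ici b) := by
  intro s (hs : b ≤ s) t _ hst
  rcases hs.eq_or_lt with rfl | hbs
  · exact hmin (mem_univ t)
  · exact hv.le_right_of_left_le'' (mem_univ b) (mem_univ t) hbs hst (hmin (mem_univ s))

theorem convexOn_ite_lt (hv : ConvexOn ℝ univ v) (hmin : IsMinOn v univ b) (hb : v b = 0) :
    ConvexOn ℝ univ (fun x => if b < x then v x else 0) := by
  have heq : (fun x => if b < x then v x else 0) = (Ici b).piecewise v fun _ => 0 := by
    ext x
    rcases lt_trichotomy b x with hx | rfl | hx
    · simp [hx, hx.le]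
    · simp [hb]
    · simp [hx.not_gt, hx.not_ge]
  rw [heq]
  exact convexOn_univ_piecewise_Ici_of_monotoneOn_Ici_antitoneOn_Iic
    (hv.subset (subset_univ _) (convex_Ici b)) (convexOn_const 0 (convex_Iic b))
    (hv.monotoneOn_Ici_of_isMinOn hmin) antitoneOn_const hb

theorem ite_lt_nonneg (hmin : IsMinOn v univ b) (hb : v b = 0) (x : ℝ) :
    0 ≤ if b < x then v x else 0 := by
  split_ifs
  · exact hb ▸ hmin (mem_univ x)
  · exact le_rfl

theorem hasDerivAt_ite_lt (hv : ∀ x, HasDerivAt v (v' x) x) (hb : v b = 0) (hb' : v' b = 0)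
    (x : ℝ) : HasDerivAt (fun x => if b < x then v x else 0) (v' (max x b)) x := by
  set u := fun x => if b < x then v x else 0
  have hu_right : ∀ y ∈ Ici b, u y = v y := by
    intro y hy
    rcases (mem_Ici.1 hy).eq_or_lt with rfl | hby
    · simp [u, hb]
    · simp [u, hby]
  have hu_left : ∀ y ∈ Iic b, u y = 0 := fun y hy => if_neg (not_lt.2 hy)
  have hright : ∀ y ∈ Ici b, HasDerivWithinAt u (v' y) (Ici b) y := fun y hy =>
    (hv y).hasDerivWithinAt.congr hu_right (hu_right y hy)
  have hleft : ∀ y ∈ Iic b, HasDerivWithinAt u 0 (Iic b) y := fun y hy =>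
    (hasDerivWithinAt_const y _ 0).congr hu_left (hu_left y hy)
  rcases lt_trichotomy x b with hx | rfl | hx
  · rw [max_eq_right hx.le, hb']
    exact (hleft x hx.le).hasDerivAt (Iic_mem_nhds hx)
  · rw [max_self, hb', ← hasDerivWithinAt_univ, ← Iic_union_Ici]
    exact (hleft x self_mem_Iic).union (hb' ▸ hright x self_mem_Ici)
  · rw [max_eq_left hx.le]
    exact (hright x hx.le).hasDerivAt (Ici_mem_nhds hx)

theorem contDiff_one_ite_lt (hv : ∀ x, HasDerivAt v (v' x) x) (hcont : Continuous v')
    (hb : v b = 0) (hb' : v' b = 0) : ContDiff ℝ 1 (fun x => if b < x then v x else 0) := by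
  have hderiv := fun x => hasDerivAt_ite_lt hv hb hb' x
  rw [contDiff_one_iff_deriv, funext fun x => (hderiv x).deriv]
  exact ⟨fun x => (hderiv x).differentiableAt, hcont.comp (continuous_id.max continuous_const)⟩

end FreeBoundary

section OUphi

variable {lam th mu sig : ℝ}

theorem OUphi_pos (hp : 0 < lam / th) (x : ℝ) : 0 < OUphi lam th mu sig x :=
  integral_ouKernel_pos (by linarith) x

theorem hasDerivAt_OUphi (hp : 0 < lam / th) (x : ℝ) :
    HasDerivAt (OUphi lam th mu sig) (deriv (OUphi lam th mu sig) x) x :=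
  (hasDerivAt_integral_ouKernel (by linarith) x).differentiableAt.hasDerivAt

theorem continuous_deriv_OUphi (hp : 0 < lam / th) :
    Continuous (deriv (OUphi lam th mu sig)) :=
  (continuous_integral_deriv_ouKernel (by linarith)).congr fun x =>
    ((hasDerivAt_integral_ouKernel (by linarith) x).deriv).symm

theorem convexOn_OUphi (hp : 0 < lam / th) : ConvexOn ℝ univ (OUphi lam th mu sig) :=
  convexOn_integral_ouKernel (by linarith)

end OUphi

section Gfun

variable {lam th mu : ℝ} {Phi : ℝ → ℝ} {c : ℝ}

theorem hasDerivAt_Gfun (x : ℝ) :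
    HasDerivAt (fun y => Gfun lam th mu Phi y c) (kfun lam th Phi c / (lam + th)) x := by
  simpa [Gfun] using (((hasDerivAt_id x).sub_const mu).const_mul (kfun lam th Phi c)).div_const
    (lam + th) |>.const_add (mu * (kfun lam th Phi c - th) / lam)

theorem convexOn_Gfun : ConvexOn ℝ univ (fun x => Gfun lam th mu Phi x c) := by
  refine ⟨convex_univ, fun x _ y _ s w _ _ hsw => le_of_eq ?_⟩
  obtain rfl : w = 1 - s := by linarith
  simp only [Gfun, smul_eq_mul]
  ring

theorem Gfun_x0fun (hlam : lam ≠ 0) (hlt : lam + th ≠ 0) (hk : kfun lam th Phi c ≠ 0) :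
    Gfun lam th mu Phi (x0fun lam th mu Phi c) c = 0 := by
  unfold Gfun x0fun
  field_simp
  unfold kfun
  ring

theorem Gfun_neg_of_lt_x0fun (hlam : lam ≠ 0) (hlt : 0 < lam + th) (hk : 0 < kfun lam th Phi c)
    {x : ℝ} (hx : x < x0fun lam th mu Phi c) : Gfun lam th mu Phi x c < 0 := by
  have hdiff : Gfun lam th mu Phi x c - Gfun lam th mu Phi (x0fun lam th mu Phi c) c
      = kfun lam th Phi c * (x - x0fun lam th mu Phi c) / (lam + th) := by
    unfold Gfun
    ring
  rw [Gfun_x0fun hlam hlt.ne' hk.ne', sub_zero] at hdiff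
  rw [hdiff]
  exact div_neg_of_neg_of_pos (mul_neg_of_pos_of_neg hk (by linarith)) hlt

end Gfun

noncomputable def continuationValue (lam th mu sig : ℝ) (Phi : ℝ → ℝ) (b x c : ℝ) : ℝ :=
  Gfun lam th mu Phi x c - Gfun lam th mu Phi b c / OUphi lam th mu sig b * OUphi lam th mu sig x

noncomputable def continuationValueDeriv (lam th mu sig : ℝ) (Phi : ℝ → ℝ) (b x c : ℝ) : ℝ :=
  kfun lam th Phi c / (lam + th)
    - Gfun lam th mu Phi b c / OUphi lam th mu sig b * deriv (OUphi lam th mu sig) x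

section ContinuationValue

variable (lam th mu sig : ℝ) (Phi : ℝ → ℝ) (b c : ℝ)

theorem ufun_eq_ite : (fun x => ufun lam th mu sig Phi b x c) =
    fun x => if b < x then continuationValue lam th mu sig Phi b x c else 0 :=
  rfl

theorem continuationValue_self (hp : 0 < lam / th) :
    continuationValue lam th mu sig Phi b b c = 0 := by
  rw [continuationValue, div_mul_cancel₀ _ (OUphi_pos hp b).ne', sub_self]

theorem hasDerivAt_continuationValue (hp : 0 < lam / th) (x : ℝ) :
    HasDerivAt (fun y => continuationValue lam th mu sig Phi b y c)
      (continuationValueDeriv lam th mu sig Phi b x c) x :=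
  (hasDerivAt_Gfun x).sub ((hasDerivAt_OUphi hp x).const_mul _)

theorem continuous_continuationValueDeriv (hp : 0 < lam / th) :
    Continuous fun x => continuationValueDeriv lam th mu sig Phi b x c :=
  continuous_const.sub (continuous_const.mul (continuous_deriv_OUphi hp))

theorem continuationValueDeriv_self (hp : 0 < lam / th) :
    continuationValueDeriv lam th mu sig Phi b b c
      = Hfun lam th mu sig Phi b c / OUphi lam th mu sig b := by
  have := (OUphi_pos (mu := mu) (sig := sig) hp b).ne'
  rw [continuationValueDeriv, Hfun]
  field_simp

theorem convexOn_continuationValue (hlam : 0 < lam) (hth : 0 < th) (hk : 0 < kfun lam th Phi c)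
    (hb : b < x0fun lam th mu Phi c) :
    ConvexOn ℝ univ (fun x => continuationValue lam th mu sig Phi b x c) := by
  have hp : 0 < lam / th := div_pos hlam hth
  have hC : Gfun lam th mu Phi b c / OUphi lam th mu sig b < 0 :=
    div_neg_of_neg_of_pos (Gfun_neg_of_lt_x0fun hlam.ne' (by linarith) hk hb) (OUphi_pos hp b)
  have heq : (fun x => continuationValue lam th mu sig Phi b x c) = fun x =>
      Gfun lam th mu Phi x c
        + (-(Gfun lam th mu Phi b c / OUphi lam th mu sig b)) • OUphi lam th mu sig x := by
    ext x
    simp only [continuationValue, smul_eq_mul]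
    ring
  rw [heq]
  exact convexOn_Gfun.add ((convexOn_OUphi hp).smul (neg_nonneg.2 hC.le))

end ContinuationValue

theorem statement8_general (lam th mu sig : ℝ)
    (hlam : 0 < lam) (hth : 0 < th)
    (Phi : ℝ → ℝ)
    (c : ℝ) (hk : 0 < kfun lam th Phi c)
    (beta : ℝ)
    (hbeta0 : Hfun lam th mu sig Phi beta c = 0)
    (hbetax0 : beta < x0fun lam th mu Phi c) :
    ContDiff ℝ 1 (fun x => ufun lam th mu sig Phi beta x c) ∧
    ufun lam th mu sig Phi beta beta c = 0 ∧
    deriv (fun x => ufun lam th mu sig Phi beta x c) beta = 0 ∧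
    ConvexOn ℝ Set.univ (fun x => ufun lam th mu sig Phi beta x c) ∧
    (∀ x : ℝ, 0 ≤ ufun lam th mu sig Phi beta x c) := by
  have hp : 0 < lam / th := div_pos hlam hth
  have hv := hasDerivAt_continuationValue lam th mu sig Phi beta c hp
  have hvβ := continuationValue_self lam th mu sig Phi beta c hp
  have hfit : continuationValueDeriv lam th mu sig Phi beta beta c = 0 := by
    rw [continuationValueDeriv_self lam th mu sig Phi beta c hp, hbeta0, zero_div]
  have hconv := convexOn_continuationValue lam th mu sig Phi beta c hlam hth hk hbetax0
  have hmin := hconv.isMinOn_of_hasDerivAt_eq_zero (hfit ▸ hv beta)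
  rw [ufun_eq_ite, (hasDerivAt_ite_lt hv hvβ hfit beta).deriv, max_self]
  exact ⟨contDiff_one_ite_lt hv (continuous_continuationValueDeriv lam th mu sig Phi beta c hp)
      hvβ hfit, if_neg (lt_irrefl beta), hfit, convexOn_ite_lt hconv hmin hvβ,
    ite_lt_nonneg hmin hvβ⟩

/-- fix `c ∈ [0,1]` with `k(c) > 0` and let `β` be the unique zero of
`H(·;c)`, with `β < x₀(c)`. Then `u(·;c)` is `C¹` on `ℝ` (in particular value matching
`u(β;c) = 0` and smooth fit `u'(β;c) = 0` hold), is convex on `ℝ` and is nonnegative. -/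
theorem statement8 (lam th mu sig : ℝ)
    (hlam : 0 < lam) (hth : 0 < th) (hmu : 0 < mu) (hsig : 0 < sig)
    (Phi : ℝ → ℝ) (hPhiC2 : ContDiff ℝ 2 Phi)
    (hPhiconv : StrictConvexOn ℝ Set.univ Phi)
    (hPhi' : ∀ c ∈ Set.Icc (0:ℝ) 1, deriv Phi c < 0) (hPhi1 : Phi 1 = 0)
    (c : ℝ) (hc : c ∈ Set.Icc (0:ℝ) 1) (hk : 0 < kfun lam th Phi c)
    (beta : ℝ)
    (hbeta0 : Hfun lam th mu sig Phi beta c = 0)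
    (hbetau : ∀ y : ℝ, Hfun lam th mu sig Phi y c = 0 → y = beta)
    (hbetax0 : beta < x0fun lam th mu Phi c) :
    ContDiff ℝ 1 (fun x => ufun lam th mu sig Phi beta x c) ∧
    ufun lam th mu sig Phi beta beta c = 0 ∧
    deriv (fun x => ufun lam th mu sig Phi beta x c) beta = 0 ∧
    ConvexOn ℝ Set.univ (fun x => ufun lam th mu sig Phi beta x c) ∧
    (∀ x : ℝ, 0 ≤ ufun lam th mu sig Phi beta x c) :=
  statement8_general lam th mu sig hlam hth Phi c hk beta hbeta0 hbetax0
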